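/- arXiv:1112.3101 — 2 statements merged into one kernel-verified Lean document; each statement's English description precedes it below -/
import Mathlib

section
/- For ε > 0 and ν = (ν₁,ν₂,ν₃) ∈ ℝ³, the 6×6 symmetric matrix 𝔅₁^ε = [[ν₁,ν₂,ν₃,0,0,0],[ν₂,−ν₁,0,0,0,−ε^{-1}],[ν₃,0,−ν₁,0,ε^{-1},0],[0,0,0,ν₁,ν₂,ν₃],[0,0,ε^{-1},ν₂,−ν₁,0],[0,−ε^{-1},0,ν₃,0,−ν₁]] has determinant det(𝔅₁^ε) = ν₁²(|ν|² − 1/ε²)². -/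
/-!
Over `ℂ`, a matrix of the block shape `[[A, -B], [B, A]]` is conjugate, via `Q = [[1, i], [1, -i]]`,
to `diag (A + iB, A - iB)`. For `𝔅₁^ε` we have `A = [[ν₁, ν₂, ν₃], [ν₂, -ν₁, 0], [ν₃, 0, -ν₁]]` and
`B = ε⁻¹ J` with `J = [[0, 0, 0], [0, 0, 1], [0, -1, 0]]`, and `det (A + tJ) = ν₁ (|ν|² + t²)`,
so with `t = ±i ε⁻¹` both factors equal `ν₁ (|ν|² - ε⁻²)`.
-/

/-- The coefficient matrix `𝔅₁^ε` of `∂₁` in the secondary symmetrization of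
the scaled Maxwell equations combined with the divergence constraints. -/
noncomputable def frakB1 (ε : ℝ) (ν : Fin 3 → ℝ) : Matrix (Fin 6) (Fin 6) ℝ :=
  Matrix.of
    ![![ν 0, ν 1, ν 2, 0, 0, 0],
      ![ν 1, -ν 0, 0, 0, 0, -ε⁻¹],
      ![ν 2, 0, -ν 0, 0, ε⁻¹, 0],
      ![0, 0, 0, ν 0, ν 1, ν 2],
      ![0, 0, ε⁻¹, ν 1, -ν 0, 0],
      ![0, -ε⁻¹, 0, ν 2, 0, -ν 0]]

open Matrix Complex

theorem Matrix.det_fromBlocks_neg_swap {n : Type*} [Fintype n] [DecidableEq n]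
    (A B : Matrix n n ℂ) :
    (fromBlocks A (-B) B A).det = (A + I • B).det * (A - I • B).det := by
  set Q : Matrix (n ⊕ n) (n ⊕ n) ℂ := fromBlocks 1 (I • 1) 1 (-I • 1)
  have hQ : Q.det ≠ 0 := by
    simp only [Q, det_fromBlocks_one₁₁, Matrix.one_mul, ← sub_smul, det_smul, det_one, mul_one]
    refine pow_ne_zero _ ?_
    rw [sub_eq_add_neg, ← neg_add, neg_ne_zero, ← two_mul]
    exact mul_ne_zero two_ne_zero I_ne_zero
  have hconj : Q * fromBlocks A (-B) B A = fromBlocks (A + I • B) 0 0 (A - I • B) * Q := by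
    simp only [Q, fromBlocks_multiply]
    congr 1 <;> simp only [Matrix.one_mul, Matrix.mul_one, Matrix.mul_smul, Matrix.smul_mul] <;>
      match_scalars <;> ring_nf <;> simp only [I_sq]
  have hdet := congrArg det hconj
  rw [det_mul, det_mul, det_fromBlocks_zero₂₁] at hdet
  exact mul_left_cancel₀ hQ (by rw [hdet, mul_comm])

section Blocks

variable {R : Type*} [CommRing R]

def frakB1DiagBlock (a b c : R) : Matrix (Fin 3) (Fin 3) R := !![a, b, c; b, -a, 0; c, 0, -a]

def frakB1OffDiagBlock : Matrix (Fin 3) (Fin 3) R := !![0, 0, 0; 0, 0, 1; 0, -1, 0]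

theorem det_frakB1DiagBlock_add_smul_frakB1OffDiagBlock (a b c t : R) :
    (frakB1DiagBlock a b c + t • frakB1OffDiagBlock).det = a * (a ^ 2 + b ^ 2 + c ^ 2 + t ^ 2) := by
  simp only [frakB1DiagBlock, frakB1OffDiagBlock, smul_of, smul_cons, smul_eq_mul, mul_zero,
    smul_empty, mul_one, mul_neg, of_add_of, add_cons, head_cons, add_zero, tail_cons,
    empty_add_empty, zero_add, det_fin_three, Fin.isValue, of_apply, cons_val', cons_val_zero,
    cons_val_fin_one, cons_val_one, cons_val, neg_mul, neg_neg, sub_neg_eq_add]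
  ring

end Blocks

theorem reindex_map_ofReal_frakB1 (ε : ℝ) (ν : Fin 3 → ℝ) :
    reindex (finSumFinEquiv (m := 3) (n := 3)).symm (finSumFinEquiv (m := 3) (n := 3)).symm
        ((frakB1 ε ν).map ofReal) =
      fromBlocks (frakB1DiagBlock (ν 0 : ℂ) (ν 1) (ν 2)) (-((ε : ℂ)⁻¹ • frakB1OffDiagBlock))
        ((ε : ℂ)⁻¹ • frakB1OffDiagBlock) (frakB1DiagBlock (ν 0 : ℂ) (ν 1) (ν 2)) := by
  ext (i | i) (j | j) <;>
    simp only [reindex_apply, Equiv.symm_symm, submatrix_apply, finSumFinEquiv_apply_left,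
      finSumFinEquiv_apply_right, fromBlocks_apply₁₁, fromBlocks_apply₁₂, fromBlocks_apply₂₁,
      fromBlocks_apply₂₂] <;>
    fin_cases i <;> fin_cases j <;>
    simp [frakB1, frakB1DiagBlock, frakB1OffDiagBlock]

theorem frakB1_det_general (ε : ℝ) (ν : Fin 3 → ℝ) :
    (frakB1 ε ν).det =
      ν 0 ^ 2 * ((ν 0 ^ 2 + ν 1 ^ 2 + ν 2 ^ 2) - 1 / ε ^ 2) ^ 2 := by
  apply ofReal_injective
  calc ((frakB1 ε ν).det : ℂ) = ((frakB1 ε ν).map ofReal).det := RingHom.map_det ofRealHom _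
    _ = (reindex (finSumFinEquiv (m := 3) (n := 3)).symm (finSumFinEquiv (m := 3) (n := 3)).symm
          ((frakB1 ε ν).map ofReal)).det := (det_reindex_self _ _).symm
    _ = _ := by
      rw [reindex_map_ofReal_frakB1, det_fromBlocks_neg_swap, smul_smul, sub_eq_add_neg,
        ← neg_smul, det_frakB1DiagBlock_add_smul_frakB1OffDiagBlock,
        det_frakB1DiagBlock_add_smul_frakB1OffDiagBlock, neg_sq, mul_pow, I_sq]
      push_cast
      ring

/-- `det(𝔅₁^ε) = ν₁² (|ν|² − 1/ε²)²`. -/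
theorem frakB1_det (ε : ℝ) (hε : 0 < ε) (ν : Fin 3 → ℝ) :
    (frakB1 ε ν).det =
      ν 0 ^ 2 * ((ν 0 ^ 2 + ν 1 ^ 2 + ν 2 ^ 2) - 1 / ε ^ 2) ^ 2 :=
  frakB1_det_general ε ν
end

section
/- Let ε > 0 and ν ∈ ℝ³ with ν ≠ 0 and ε|ν| ≠ 1, and let A, B ∈ ℝ³ satisfy A − ε ν×B + λ₁ ν = 0 and B + ε ν×A + λ₂ ν = 0 for some λ₁, λ₂ ∈ ℝ. Then ν×A = 0 and ν×B = 0; consequently A = −λ₁ν and B = −λ₂ν. -/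
/-!
Crossing both equations with `ν` kills the `ν`-terms and gives `ν × A = ε ν × (ν × B)` and
`ν × B = -ε ν × (ν × A)`. Since `ν × A` is orthogonal to `ν`, the expansion
`ν × (ν × w) = (ν · w) ν - |ν|² w` turns these into `(1 - ε² |ν|²) (ν × A) = 0`, and
`ε|ν| ≠ 1` with `ε|ν| ≥ 0` makes the scalar nonzero.
-/

open Matrix

section CommRing

variable {R : Type*} [CommRing R] {ν A B : Fin 3 → R} {ε l₁ l₂ : R}

theorem cross_cross_self_of_dotProduct_eq_zero {w : Fin 3 → R} (h : ν ⬝ᵥ w = 0) :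
    ν ⨯₃ (ν ⨯₃ w) = -(ν ⬝ᵥ ν) • w := by
  rw [cross_cross_eq_smul_sub_smul', h, zero_smul, zero_sub, neg_smul]

theorem cross_eq_of_sub_smul_cross_add_smul_eq_zero (h : A - ε • ν ⨯₃ B + l₁ • ν = 0) :
    ν ⨯₃ A = ε • ν ⨯₃ (ν ⨯₃ B) := by
  have := congrArg (ν ⨯₃ ·) h
  simpa only [map_add, map_sub, map_smul, cross_self, smul_zero, add_zero, map_zero,
    sub_eq_zero] using this

theorem cross_eq_of_add_smul_cross_add_smul_eq_zero (h : B + ε • ν ⨯₃ A + l₂ • ν = 0) :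
    ν ⨯₃ B = -ε • ν ⨯₃ (ν ⨯₃ A) :=
  cross_eq_of_sub_smul_cross_add_smul_eq_zero (l₁ := l₂) (by rwa [neg_smul, sub_neg_eq_add])

theorem one_sub_smul_cross_eq_zero_of_secondary_symmetrization
    (hA : A - ε • ν ⨯₃ B + l₁ • ν = 0) (hB : B + ε • ν ⨯₃ A + l₂ • ν = 0) :
    (1 - ε ^ 2 * (ν ⬝ᵥ ν)) • ν ⨯₃ A = 0 := by
  have hA_cross := cross_eq_of_sub_smul_cross_add_smul_eq_zero hA
  have hB_cross := cross_eq_of_add_smul_cross_add_smul_eq_zero hB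
  have h_fixed : ν ⨯₃ A = (ε ^ 2 * (ν ⬝ᵥ ν)) • ν ⨯₃ A := by
    calc ν ⨯₃ A = ε • ν ⨯₃ (ν ⨯₃ B) := hA_cross
      _ = (-ε ^ 2) • ν ⨯₃ (ν ⨯₃ (ν ⨯₃ A)) := by
        rw [hB_cross, map_smul, smul_smul, mul_neg, ← sq]
      _ = (ε ^ 2 * (ν ⬝ᵥ ν)) • ν ⨯₃ A := by
        rw [cross_cross_self_of_dotProduct_eq_zero (dot_self_cross ν A), smul_smul]
        ring_nf
  rw [sub_smul, one_smul, ← h_fixed, sub_self]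

end CommRing

theorem cross_eq_zero_of_secondary_symmetrization_of_field {K : Type*} [Field K]
    {ν A B : Fin 3 → K} {ε l₁ l₂ : K} (hεν : ε ^ 2 * (ν ⬝ᵥ ν) ≠ 1)
    (hA : A - ε • ν ⨯₃ B + l₁ • ν = 0) (hB : B + ε • ν ⨯₃ A + l₂ • ν = 0) :
    ν ⨯₃ A = 0 ∧ ν ⨯₃ B = 0 ∧ A = -l₁ • ν ∧ B = -l₂ • ν := by
  have hA_zero : ν ⨯₃ A = 0 :=
    (smul_eq_zero.mp (one_sub_smul_cross_eq_zero_of_secondary_symmetrization hA hB)).resolve_left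
      (sub_ne_zero.mpr hεν.symm)
  have hB_zero : ν ⨯₃ B = 0 := by
    rw [cross_eq_of_add_smul_cross_add_smul_eq_zero hB, hA_zero, map_zero, smul_zero]
  refine ⟨hA_zero, hB_zero, ?_, ?_⟩
  · rw [hB_zero, smul_zero, sub_zero, add_eq_zero_iff_eq_neg] at hA
    rw [hA, neg_smul]
  · rw [hA_zero, smul_zero, add_zero, add_eq_zero_iff_eq_neg] at hB
    rw [hB, neg_smul]

theorem cross_eq_zero_of_secondary_symmetrization_general (ε : ℝ) (hε : 0 < ε)
    (ν A B : Fin 3 → ℝ) (l₁ l₂ : ℝ)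
    (hεν : ε * Real.sqrt (ν 0 ^ 2 + ν 1 ^ 2 + ν 2 ^ 2) ≠ 1)
    (hA : A - ε • crossProduct ν B + l₁ • ν = 0)
    (hB : B + ε • crossProduct ν A + l₂ • ν = 0) :
    crossProduct ν A = 0 ∧ crossProduct ν B = 0 ∧
      A = -l₁ • ν ∧ B = -l₂ • ν := by
  have hdot : ν ⬝ᵥ ν = ν 0 ^ 2 + ν 1 ^ 2 + ν 2 ^ 2 := by
    simp only [vec3_dotProduct]; ring
  have hsq : (ε * Real.sqrt (ν ⬝ᵥ ν)) ^ 2 = ε ^ 2 * (ν ⬝ᵥ ν) := by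
    rw [mul_pow, Real.sq_sqrt (hdot ▸ by positivity)]
  refine cross_eq_zero_of_secondary_symmetrization_of_field ?_ hA hB
  rw [← hsq, Ne, pow_eq_one_iff_of_nonneg (by positivity) two_ne_zero, hdot]
  exact hεν

/-- If `ν ≠ 0`, `ε|ν| ≠ 1`, and `A − εν×B + l₁ν = 0`, `B + εν×A + l₂ν = 0`,
then `ν×A = 0`, `ν×B = 0`, and consequently `A = −l₁ν`, `B = −l₂ν`. -/
theorem cross_eq_zero_of_secondary_symmetrization (ε : ℝ) (hε : 0 < ε)
    (ν A B : Fin 3 → ℝ) (l₁ l₂ : ℝ) (hν : ν ≠ 0)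
    (hεν : ε * Real.sqrt (ν 0 ^ 2 + ν 1 ^ 2 + ν 2 ^ 2) ≠ 1)
    (hA : A - ε • crossProduct ν B + l₁ • ν = 0)
    (hB : B + ε • crossProduct ν A + l₂ • ν = 0) :
    crossProduct ν A = 0 ∧ crossProduct ν B = 0 ∧
      A = -l₁ • ν ∧ B = -l₂ • ν :=
  cross_eq_zero_of_secondary_symmetrization_general ε hε ν A B l₁ l₂ hεν hA hB
end
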